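/- Completeness of petrification: if the program prog is correct, then for every thread limit β the petrified program P_β(prog) satisfies its safety specification S_safe. -/

import Mathlib

/-! Core semantics of the concurrent language with fork/join. -/

namespace Conc

abbrev Var := String
abbrev Val := ℤ
/-- Integer-valued expressions (shallow embedding, evaluated in a combined state). -/
abbrev AExp := (Var → Val) → Val
/-- Boolean-valued expressions. -/
abbrev BExp := (Var → Val) → Prop

/-- Commands of the language, parameterized by the type `T` of thread template names. -/
inductive Cmd (T : Type) where
  | assign : Var → AExp → Cmd T
  | assume_ : BExp → Cmd T
  | assert_ : BExp → Cmd T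
  | ite : BExp → Cmd T → Cmd T → Cmd T
  | while_ : BExp → Cmd T → Cmd T
  | fork : AExp → T → Cmd T
  | join : AExp → Cmd T
  | seq : Cmd T → Cmd T → Cmd T

/-- A remainder program: a command, successful termination `Ω`, or failure `↯`. -/
inductive Rem (T : Type) where
  | run : Cmd T → Rem T
  | term : Rem T   -- Ω
  | fail : Rem T   -- ↯

/-- Sequential composition `C ; X` of a command with a remainder, with `C ; Ω = C`. -/
def Rem.after {T : Type} (C : Cmd T) : Rem T → Rem T
  | .run C' => .run (C.seq C')
  | _ => .run C

/-- A local configuration `⟨X, θ, t, s⟩`. -/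
structure LConf (T : Type) where
  rem : Rem T
  tmpl : T
  tid : Option Val
  st : Var → Val

/-- A program: bodies of thread templates, the main template, and the global variables. -/
structure Prog (T : Type) where
  body : T → Cmd T
  main : T
  isGlobal : Var → Bool

/-- Combined state `s ∪ g`. -/
def Prog.comb {T : Type} (P : Prog T) (g s : Var → Val) : Var → Val :=
  fun x => if P.isGlobal x then g x else s x

/-- Kinds of simple statements labelling a step. -/
inductive Lab (T : Type) where
  | atomic : Lab T
  | forkL : T → Lab T
  | joinL : Lab T

/-- Global configurations: a multiset of local configurations and a global state. -/
abbrev GConf (T : Type) := Multiset (LConf T) × (Var → Val)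

/-- The small-step semantic transition relation. -/
inductive Step {T : Type} (P : Prog T) : Lab T → GConf T → GConf T → Prop where
  | assume_ {e : BExp} {X θ t s g} (h : e (P.comb g s)) :
      Step P .atomic ({⟨Rem.after (.assume_ e) X, θ, t, s⟩}, g) ({⟨X, θ, t, s⟩}, g)
  | assignGlobal {x e X θ t s g} (hx : P.isGlobal x = true) :
      Step P .atomic ({⟨Rem.after (.assign x e) X, θ, t, s⟩}, g)
        ({⟨X, θ, t, s⟩}, Function.update g x (e (P.comb g s)))
  | assignLocal {x e X θ t s g} (hx : P.isGlobal x = false) :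
      Step P .atomic ({⟨Rem.after (.assign x e) X, θ, t, s⟩}, g)
        ({⟨X, θ, t, Function.update s x (e (P.comb g s))⟩}, g)
  | assert₁ {e : BExp} {X θ t s g} (h : e (P.comb g s)) :
      Step P .atomic ({⟨Rem.after (.assert_ e) X, θ, t, s⟩}, g) ({⟨X, θ, t, s⟩}, g)
  | assert₂ {e : BExp} {X θ t s g} (h : ¬ e (P.comb g s)) :
      Step P .atomic ({⟨Rem.after (.assert_ e) X, θ, t, s⟩}, g) ({⟨.fail, θ, t, s⟩}, g)
  | ite₁ {e C₁ C₂ X θ t s g} (h : e (P.comb g s)) :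
      Step P .atomic ({⟨Rem.after (.ite e C₁ C₂) X, θ, t, s⟩}, g)
        ({⟨Rem.after C₁ X, θ, t, s⟩}, g)
  | ite₂ {e C₁ C₂ X θ t s g} (h : ¬ e (P.comb g s)) :
      Step P .atomic ({⟨Rem.after (.ite e C₁ C₂) X, θ, t, s⟩}, g)
        ({⟨Rem.after C₂ X, θ, t, s⟩}, g)
  | while₁ {e C X θ t s g} (h : e (P.comb g s)) :
      Step P .atomic ({⟨Rem.after (.while_ e C) X, θ, t, s⟩}, g)
        ({⟨Rem.after C (Rem.after (.while_ e C) X), θ, t, s⟩}, g)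
  | while₂ {e C X θ t s g} (h : ¬ e (P.comb g s)) :
      Step P .atomic ({⟨Rem.after (.while_ e C) X, θ, t, s⟩}, g) ({⟨X, θ, t, s⟩}, g)
  | fork {e θ' X θ t s s' g} :
      Step P (.forkL θ') ({⟨Rem.after (.fork e θ') X, θ, t, s⟩}, g)
        ({⟨X, θ, t, s⟩, ⟨.run (P.body θ'), θ', some (e (P.comb g s)), s'⟩}, g)
  | join {e X θ t s θ' s' g} :
      Step P .joinL
        ({⟨Rem.after (.join e) X, θ, t, s⟩, ⟨.term, θ', some (e (P.comb g s)), s'⟩}, g)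
        ({⟨X, θ, t, s⟩}, g)
  | frame {l M₁ M₁' M₂ g g'} :
      Step P l (M₁, g) (M₁', g') → Step P l (M₁ + M₂, g) (M₁' + M₂, g')

/-- Initial global configurations. -/
def IsInit {T : Type} (P : Prog T) (c : GConf T) : Prop :=
  ∃ s, c.1 = {⟨.run (P.body P.main), P.main, none, s⟩}

/-- `cfg 0 → cfg 1 → … → cfg n` is an execution with statement kinds `lab`. -/
def IsExec {T : Type} (P : Prog T) (n : ℕ) (cfg : ℕ → GConf T) (lab : ℕ → Lab T) : Prop :=
  IsInit P (cfg 0) ∧ ∀ i < n, Step P (lab i) (cfg i) (cfg (i + 1))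

/-- The number of local configurations with thread template `θ` in `M`. -/
def tmplCount {T : Type} [DecidableEq T] (M : Multiset (LConf T)) (θ : T) : ℕ :=
  Multiset.card (M.filter (fun c => c.tmpl = θ))

/-- The thread width of the program `P` is at most `β`. -/
def WidthLe {T : Type} [DecidableEq T] (P : Prog T) (β : ℕ) : Prop :=
  ∀ n cfg lab, IsExec P n cfg lab → ∀ i ≤ n, ∀ θ, tmplCount (cfg i).1 θ ≤ β

/-- `P` is correct: no execution reaches the failure marker `↯`. -/
def Correct {T : Type} (P : Prog T) : Prop :=
  ¬ ∃ n cfg lab, IsExec P n cfg lab ∧ ∃ i ≤ n, ∃ c ∈ (cfg i).1, c.rem = Rem.fail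

end Conc

/-! Petrification: the petrified program `P_β(prog)` as a Petri program. -/

namespace Conc

/-- Places of the petrified program with thread limit `β`. -/
inductive PPlace (T : Type) (β : ℕ) where
  | loc : Rem T → T → Option (Fin β) → PPlace T β
  | inUse : T → Fin β → PPlace T β
  | notInUse : T → Fin β → PPlace T β
  | insuff : T → PPlace T β

/-- Instantiated variables of the petrified program. -/
inductive IVar (T : Type) (β : ℕ) where
  | glob : Var → IVar T β
  | inst : Var → T → Option (Fin β) → IVar T β
  | idv : T → Fin β → IVar T β
deriving DecidableEq

/-- States of the petrified (Petri) program. -/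
abbrev IState (T : Type) (β : ℕ) := IVar T β → Val

/-- De-instantiated view of an instantiated state for thread instance `(θ, k)`. -/
def iev {T : Type} {β : ℕ} (P : Prog T) (σ : IState T β) (θ : T) (k : Option (Fin β)) :
    Var → Val :=
  fun x => if P.isGlobal x then σ (.glob x) else σ (.inst x θ k)

/-- Semantics of the instantiated assignment `[x := e]_{θ,k}`. -/
def assignRel {T : Type} {β : ℕ} [DecidableEq T] (P : Prog T) (x : Var) (e : AExp)
    (θ : T) (k : Option (Fin β)) : IState T β → IState T β → Prop :=
  fun σ σ' =>
    σ' = if P.isGlobal x then Function.update σ (.glob x) (e (iev P σ θ k))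
         else Function.update σ (.inst x θ k) (e (iev P σ θ k))

/-- Semantics of the instantiated statement `[assume e]_{θ,k}`. -/
def assumeRel {T : Type} {β : ℕ} (P : Prog T) (e : BExp) (θ : T) (k : Option (Fin β)) :
    IState T β → IState T β → Prop :=
  fun σ σ' => σ' = σ ∧ e (iev P σ θ k)

/-- Semantics of the fork label `id_{θ'}^{k'} := [e]_{θ,k}`. -/
def forkRel {T : Type} {β : ℕ} [DecidableEq T] (P : Prog T) (e : AExp)
    (θ : T) (k : Option (Fin β)) (θ' : T) (k' : Fin β) : IState T β → IState T β → Prop :=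
  fun σ σ' => σ' = Function.update σ (.idv θ' k') (e (iev P σ θ k))

/-- Semantics of the join label `assume id_{θ'}^{k'} == [e]_{θ,k}`. -/
def joinRel {T : Type} {β : ℕ} (P : Prog T) (e : AExp)
    (θ : T) (k : Option (Fin β)) (θ' : T) (k' : Fin β) : IState T β → IState T β → Prop :=
  fun σ σ' => σ' = σ ∧ σ (.idv θ' k') = e (iev P σ θ k)

/-- The control-flow relation of petrification: `pre ⟶[R] post`, where transitions are
labelled with the semantic relation `R` of their instantiated simple statement. -/
inductive PTrans {T : Type} {β : ℕ} [DecidableEq T] (P : Prog T) :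
    Set (PPlace T β) → (IState T β → IState T β → Prop) → Set (PPlace T β) → Prop where
  | assume_ (e : BExp) (X : Rem T) (θ : T) (k : Option (Fin β)) :
      PTrans P {.loc (Rem.after (.assume_ e) X) θ k} (assumeRel P e θ k) {.loc X θ k}
  | assign (x : Var) (e : AExp) (X : Rem T) (θ : T) (k : Option (Fin β)) :
      PTrans P {.loc (Rem.after (.assign x e) X) θ k} (assignRel P x e θ k) {.loc X θ k}
  | assert₁ (e : BExp) (X : Rem T) (θ : T) (k : Option (Fin β)) :
      PTrans P {.loc (Rem.after (.assert_ e) X) θ k} (assumeRel P e θ k) {.loc X θ k}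
  | assert₂ (e : BExp) (X : Rem T) (θ : T) (k : Option (Fin β)) :
      PTrans P {.loc (Rem.after (.assert_ e) X) θ k}
        (assumeRel P (fun v => ¬ e v) θ k) {.loc Rem.fail θ k}
  | ite₁ (e : BExp) (C₁ C₂ : Cmd T) (X : Rem T) (θ : T) (k : Option (Fin β)) :
      PTrans P {.loc (Rem.after (.ite e C₁ C₂) X) θ k} (assumeRel P e θ k)
        {.loc (Rem.after C₁ X) θ k}
  | ite₂ (e : BExp) (C₁ C₂ : Cmd T) (X : Rem T) (θ : T) (k : Option (Fin β)) :
      PTrans P {.loc (Rem.after (.ite e C₁ C₂) X) θ k} (assumeRel P (fun v => ¬ e v) θ k)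
        {.loc (Rem.after C₂ X) θ k}
  | while₁ (e : BExp) (C : Cmd T) (X : Rem T) (θ : T) (k : Option (Fin β)) :
      PTrans P {.loc (Rem.after (.while_ e C) X) θ k} (assumeRel P e θ k)
        {.loc (Rem.after C (Rem.after (.while_ e C) X)) θ k}
  | while₂ (e : BExp) (C : Cmd T) (X : Rem T) (θ : T) (k : Option (Fin β)) :
      PTrans P {.loc (Rem.after (.while_ e C) X) θ k} (assumeRel P (fun v => ¬ e v) θ k)
        {.loc X θ k}
  | fork (e : AExp) (θ' : T) (X : Rem T) (θ : T) (k : Option (Fin β)) (k' : Fin β) :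
      PTrans P
        ({.loc (Rem.after (.fork e θ') X) θ k, .notInUse θ' k'} ∪
          (PPlace.inUse θ') '' {j | j < k'})
        (forkRel P e θ k θ' k')
        ({.loc X θ k, .loc (.run (P.body θ')) θ' (some k'), .inUse θ' k'} ∪
          (PPlace.inUse θ') '' {j | j < k'})
  | insufficiency (e : AExp) (θ' : T) (X : Rem T) (θ : T) (k : Option (Fin β)) :
      PTrans P
        ({.loc (Rem.after (.fork e θ') X) θ k} ∪ (PPlace.inUse θ') '' Set.univ)
        (fun σ σ' => σ' = σ)
        {.insuff θ'}
  | join (e : AExp) (X : Rem T) (θ : T) (k : Option (Fin β)) (θ' : T) (k' : Fin β) :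
      PTrans P {.loc (Rem.after (.join e) X) θ k, .loc Rem.term θ' (some k'), .inUse θ' k'}
        (joinRel P e θ k θ' k')
        {.loc X θ k, .notInUse θ' k'}

/-- Initial marking of the petrified program. -/
def initMark {T : Type} (P : Prog T) (β : ℕ) : Set (PPlace T β) :=
  {PPlace.loc (.run (P.body P.main)) P.main none} ∪ {p | ∃ θ k, p = PPlace.notInUse θ k}

/-- Reachability of a marking together with a semantically consistent state
(markings of the 1-safe petrified program are identified with sets of places). -/
inductive PReach {T : Type} [DecidableEq T] (P : Prog T) (β : ℕ) :
    Set (PPlace T β) → IState T β → Prop where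
  | init (σ : IState T β) : PReach P β (initMark P β) σ
  | step {m σ pre R post σ'} : PReach P β m σ → PTrans P pre R post → pre ⊆ m →
      R σ σ' → PReach P β ((m \ pre) ∪ post) σ'

/-- The petrified program satisfies the specification `S` (a set of bad places):
no semantically executable firing sequence reaches a marking intersecting `S`. -/
def Satisfies {T : Type} [DecidableEq T] (P : Prog T) (β : ℕ) (S : Set (PPlace T β)) : Prop :=
  ¬ ∃ m σ, PReach P β m σ ∧ (m ∩ S).Nonempty

/-- The safety specification `S_safe`. -/
def Ssafe (T : Type) (β : ℕ) : Set (PPlace T β) :=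
  {p | ∃ θ k, p = PPlace.loc Rem.fail θ k}

/-- The bound specification `S_bound`. -/
def Sbound (T : Type) (β : ℕ) : Set (PPlace T β) :=
  {p | ∃ θ, p = PPlace.insuff θ}

end Conc

/-!
Every marking reachable in `P_β(prog)` together with its state `σ` is simulated by a reachable
configuration of `prog`: each marked place `⟨X, θ, k⟩` is a thread at remainder `X` whose local
state and thread id are read off `σ` at the instance `(θ, k)`, and the global state is the global
part of `σ`. Every transition of the petrified program is mirrored by the matching step of
`prog`; the `notInUse` places make the instance chosen by a fork fresh. An insufficiency
transition merely stops tracking the forking thread. Hence a marked place `⟨↯, θ, k⟩` yields a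
reachable configuration of `prog` containing `↯`.
-/

namespace Conc

variable {T : Type} {β : ℕ}

inductive Reach (P : Prog T) : GConf T → Prop where
  | init (s g) : Reach P ({⟨.run (P.body P.main), P.main, none, s⟩}, g)
  | step {c c' : GConf T} {l : Lab T} : Reach P c → Step P l c c' → Reach P c'

namespace Reach

variable {P : Prog T}

lemma exists_isExec {c : GConf T} (h : Reach P c) :
    ∃ n cfg lab, IsExec P n cfg lab ∧ cfg n = c := by
  induction h with
  | init s g => exact ⟨0, fun _ => _, fun _ => .atomic, ⟨⟨s, rfl⟩, by simp⟩, rfl⟩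
  | @step c c' l _ hs ih =>
    obtain ⟨n, cfg, lab, ⟨hinit, hsteps⟩, rfl⟩ := ih
    refine ⟨n + 1, fun i => if i ≤ n then cfg i else c', fun i => if i < n then lab i else l,
      ⟨by simpa using hinit, fun i hi => ?_⟩, by simp⟩
    rcases Nat.lt_succ_iff_lt_or_eq.mp hi with hi | rfl
    · simpa [hi.le, Nat.succ_le_of_lt hi, hi] using hsteps i hi
    · simpa using hs

lemma rem_ne_fail (hP : Correct P) {c : GConf T} (h : Reach P c) {t : LConf T}
    (ht : t ∈ c.1) : t.rem ≠ .fail := by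
  obtain ⟨n, cfg, lab, hexec, rfl⟩ := h.exists_isExec
  exact fun hf => hP ⟨n, cfg, lab, hexec, n, le_rfl, t, ht, hf⟩

lemma step_cons {a : LConf T} {N M' : Multiset (LConf T)} {g g' : Var → Val} {l : Lab T}
    (h : Reach P (a ::ₘ N, g)) (hs : Step P l ({a}, g) (M', g')) : Reach P (M' + N, g') :=
  h.step (Multiset.singleton_add a N ▸ hs.frame)

lemma step_cons₂ {a b : LConf T} {N M' : Multiset (LConf T)} {g g' : Var → Val} {l : Lab T}
    (h : Reach P (a ::ₘ b ::ₘ N, g)) (hs : Step P l ({a, b}, g) (M', g')) :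
    Reach P (M' + N, g') :=
  h.step (by simpa [Multiset.insert_eq_cons] using hs.frame (M₂ := N))

end Reach

abbrev Inst (T : Type) (β : ℕ) := T × Option (Fin β)

def globalView (σ : IState T β) : Var → Val := fun x => σ (.glob x)

def localConf (σ : IState T β) (X : Rem T) (θ : T) (k : Option (Fin β)) : LConf T :=
  ⟨X, θ, k.map fun j => σ (.idv θ j), fun x => σ (.inst x θ k)⟩

def localConfs (σ : IState T β) (S : Finset (Inst T β)) (F : Inst T β → Rem T) :
    Multiset (LConf T) :=
  S.val.map fun i => localConf σ (F i) i.1 i.2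

lemma localConf_congr {σ σ' : IState T β} {θ : T} {k : Option (Fin β)}
    (hidv : ∀ j ∈ k, σ' (.idv θ j) = σ (.idv θ j))
    (hinst : ∀ x, σ' (.inst x θ k) = σ (.inst x θ k))
    (X : Rem T) : localConf σ' X θ k = localConf σ X θ k := by
  cases k <;> simp_all [localConf]

section update

variable [DecidableEq T] {σ : IState T β} {v : Val}

lemma globalView_update_glob (x : Var) :
    globalView (Function.update σ (.glob x) v) = Function.update (globalView σ) x v :=
  Function.update_comp_eq_of_injective σ (fun _ _ h => IVar.glob.inj h) x v

lemma globalView_update_of_forall_ne {y : IVar T β} (hy : ∀ x, y ≠ .glob x) :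
    globalView (Function.update σ y v) = globalView σ := by
  funext x
  exact Function.update_of_ne (hy x).symm v σ

lemma localConf_update_glob (x : Var) (Y : Rem T) (θ : T) (k : Option (Fin β)) :
    localConf (Function.update σ (.glob x) v) Y θ k = localConf σ Y θ k :=
  localConf_congr (by simp) (by simp) Y

lemma localConf_update_inst_of_ne {x : Var} {θ θ₂ : T} {k k₂ : Option (Fin β)}
    (h : (θ₂, k₂) ≠ (θ, k)) (Y : Rem T) :
    localConf (Function.update σ (.inst x θ k) v) Y θ₂ k₂ = localConf σ Y θ₂ k₂ :=
  localConf_congr (by simp) (fun y => Function.update_of_ne (by grind) v σ) Y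

lemma localConf_update_inst_self (x : Var) (Y : Rem T) (θ : T) (k : Option (Fin β)) :
    localConf (Function.update σ (.inst x θ k) v) Y θ k
      = { localConf σ Y θ k with st := Function.update (localConf σ Y θ k).st x v } := by
  cases k <;> simp [localConf, Function.update_apply] <;> ext y <;> simp [Function.update_apply]

lemma localConf_update_idv_self (Y : Rem T) (θ : T) (k : Fin β) :
    localConf (Function.update σ (.idv θ k) v) Y θ (some k)
      = { localConf σ Y θ (some k) with tid := some v } := by
  simp [localConf]

lemma localConf_update_idv_of_ne {θ θ₂ : T} {k : Fin β} {k₂ : Option (Fin β)}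
    (h : (θ₂, k₂) ≠ (θ, some k)) (Y : Rem T) :
    localConf (Function.update σ (.idv θ k) v) Y θ₂ k₂ = localConf σ Y θ₂ k₂ :=
  localConf_congr (fun j hj => Function.update_of_ne (by rw [Option.mem_def] at hj; grind) v σ)
    (by simp) Y

end update

section localConfs

variable {σ σ' : IState T β} {S : Finset (Inst T β)} {F F' : Inst T β → Rem T}
  {i : Inst T β}

lemma localConfs_insert [DecidableEq T] (hi : i ∉ S) :
    localConfs σ (insert i S) F = localConf σ (F i) i.1 i.2 ::ₘ localConfs σ S F := by
  rw [localConfs, Finset.insert_val_of_notMem hi, Multiset.map_cons, localConfs]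

lemma localConfs_eq_cons [DecidableEq T] (hi : i ∈ S) :
    localConfs σ S F = localConf σ (F i) i.1 i.2 ::ₘ localConfs σ (S.erase i) F := by
  rw [← localConfs_insert (S.notMem_erase i), Finset.insert_erase hi]

lemma localConfs_congr
    (h : ∀ j ∈ S, localConf σ' (F' j) j.1 j.2 = localConf σ (F j) j.1 j.2) :
    localConfs σ' S F' = localConfs σ S F :=
  Multiset.map_congr rfl h

lemma localConfs_update_erase [DecidableEq T] (X : Rem T)
    (h : ∀ j ∈ S, j ≠ i → localConf σ' (F j) j.1 j.2 = localConf σ (F j) j.1 j.2) :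
    localConfs σ' (S.erase i) (Function.update F i X) = localConfs σ (S.erase i) F := by
  refine localConfs_congr fun j hj => ?_
  obtain ⟨hji, hjS⟩ := Finset.mem_erase.mp hj
  rw [Function.update_of_ne hji, h j hjS hji]

end localConfs

variable {P : Prog T}

structure Tracks (P : Prog T) (m : Set (PPlace T β)) (σ : IState T β)
    (S : Finset (Inst T β)) (F : Inst T β → Rem T) : Prop where
  -- `M` holds the threads dropped by insufficiency transitions, which stay stuck at their fork.
  reach : ∃ M, Reach P (localConfs σ S F + M, globalView σ)
  loc_mem_iff : ∀ X θ k, PPlace.loc X θ k ∈ m ↔ (θ, k) ∈ S ∧ F (θ, k) = X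
  notInUse_not_mem : ∀ θ k, (θ, some k) ∈ S → PPlace.notInUse θ k ∉ m

lemma tracks_initMark (σ : IState T β) :
    Tracks P (initMark P β) σ {(P.main, none)} fun _ => .run (P.body P.main) := by
  refine ⟨⟨0, ?_⟩, fun X θ k => ?_, fun θ k h => ?_⟩
  · simpa [localConfs, localConf] using Reach.init (P := P) _ (globalView σ)
  · simp [initMark]
    grind
  · simp at h

lemma Tracks.loc_fail_not_mem (hP : Correct P) {m : Set (PPlace T β)} {σ : IState T β}
    {S : Finset (Inst T β)} {F : Inst T β → Rem T} (h : Tracks P m σ S F)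
    (θ : T) (k : Option (Fin β)) : PPlace.loc .fail θ k ∉ m := fun hm => by
  obtain ⟨⟨M, hM⟩, hloc, -⟩ := h
  obtain ⟨hS, hF⟩ := (hloc _ θ k).mp hm
  exact hM.rem_ne_fail hP (Multiset.mem_add.mpr (.inl (Multiset.mem_map_of_mem _ hS))) hF

variable [DecidableEq T]

namespace Tracks

variable {m : Set (PPlace T β)} {σ σ' : IState T β} {S : Finset (Inst T β)}
  {F : Inst T β → Rem T}

lemma local_step (h : Tracks P m σ S F) {A B : Rem T} {θ : T} {k : Option (Fin β)}
    (hA : PPlace.loc A θ k ∈ m)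
    (hothers : ∀ Y θ₂ k₂, (θ₂, k₂) ≠ (θ, k) →
      localConf σ' Y θ₂ k₂ = localConf σ Y θ₂ k₂)
    (hstep : Step P .atomic ({localConf σ A θ k}, globalView σ)
      ({localConf σ' B θ k}, globalView σ')) :
    Tracks P (m \ {.loc A θ k} ∪ {.loc B θ k}) σ' S (Function.update F (θ, k) B) := by
  obtain ⟨⟨M, hM⟩, hloc, hfree⟩ := h
  obtain ⟨hS, hF⟩ := (hloc A θ k).mp hA
  refine ⟨⟨M, ?_⟩, fun X θ₂ k₂ => ?_, fun θ₂ k₂ h₂ => ?_⟩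
  · rw [localConfs_eq_cons hS, hF, Multiset.cons_add] at hM
    rw [localConfs_eq_cons hS, Function.update_self,
      localConfs_update_erase B fun j _ hj => hothers _ _ _ hj, ← Multiset.singleton_add,
      add_assoc]
    exact hM.step_cons hstep
  · simp only [Set.mem_union, Set.mem_sdiff, Set.mem_singleton_iff, hloc,
      Function.update_apply]
    grind
  · simp [hfree θ₂ k₂ h₂]

lemma fork (h : Tracks P m σ S F) {e : AExp} {θ' : T} {X : Rem T} {θ : T}
    {k : Option (Fin β)} {k' : Fin β} (hA : PPlace.loc (Rem.after (.fork e θ') X) θ k ∈ m)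
    (hidle : PPlace.notInUse θ' k' ∈ m) :
    Tracks P
      (m \ ({.loc (Rem.after (.fork e θ') X) θ k, .notInUse θ' k'} ∪
          (PPlace.inUse θ') '' {j | j < k'}) ∪
        ({.loc X θ k, .loc (.run (P.body θ')) θ' (some k'), .inUse θ' k'} ∪
          (PPlace.inUse θ') '' {j | j < k'}))
      (Function.update σ (.idv θ' k') (e (iev P σ θ k)))
      (insert (θ', some k') S)
      (Function.update (Function.update F (θ, k) X) (θ', some k') (.run (P.body θ'))) := by
  obtain ⟨⟨M, hM⟩, hloc, hfree⟩ := h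
  obtain ⟨hS, hF⟩ := (hloc _ θ k).mp hA
  have hnew : (θ', some k') ∉ S := fun h => hfree θ' k' h hidle
  have hne : (θ, k) ≠ (θ', some k') := fun h => hnew (h ▸ hS)
  refine ⟨⟨M, ?_⟩, fun Y θ₂ k₂ => ?_, fun θ₂ k₂ h₂ => ?_⟩
  · rw [localConfs_eq_cons hS, hF, Multiset.cons_add] at hM
    convert hM.step_cons (Step.fork (s' := fun x => σ (.inst x θ' (some k')))) using 2
    · rw [localConfs_insert hnew, localConfs_eq_cons hS, Function.update_self,
        Function.update_of_ne hne, Function.update_self, localConf_update_idv_of_ne hne,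
        localConf_update_idv_self, localConfs_congr (S := S.erase (θ, k)) (σ := σ) (F := F) ?_]
      · simp only [Multiset.insert_eq_cons, Multiset.cons_add, Multiset.singleton_add]
        exact Multiset.cons_swap _ _ _
      · intro j hj
        obtain ⟨hji, hjS⟩ := Finset.mem_erase.mp hj
        have hjn : j ≠ (θ', some k') := fun h => hnew (h ▸ hjS)
        rw [Function.update_of_ne hjn, Function.update_of_ne hji, localConf_update_idv_of_ne hjn]
    · exact globalView_update_of_forall_ne (by simp)
  · simp only [Set.mem_union, Set.mem_sdiff, Set.mem_insert_iff, Set.mem_singleton_iff,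
      Set.mem_image, hloc, Finset.mem_insert, Function.update_apply]
    grind
  · rcases Finset.mem_insert.mp h₂ with h | h
    · obtain ⟨rfl, rfl⟩ : θ₂ = θ' ∧ k₂ = k' := by simpa using h
      simp
    · simp [hfree _ _ h]

lemma join (h : Tracks P m σ S F) {e : AExp} {X : Rem T} {θ : T} {k : Option (Fin β)}
    {θ' : T} {k' : Fin β} (hA : PPlace.loc (Rem.after (.join e) X) θ k ∈ m)
    (hB : PPlace.loc .term θ' (some k') ∈ m) (hid : σ (.idv θ' k') = e (iev P σ θ k)) :
    Tracks P
      (m \ {.loc (Rem.after (.join e) X) θ k, .loc .term θ' (some k'), .inUse θ' k'} ∪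
        {.loc X θ k, .notInUse θ' k'})
      σ (S.erase (θ', some k')) (Function.update F (θ, k) X) := by
  obtain ⟨⟨M, hM⟩, hloc, hfree⟩ := h
  obtain ⟨hSA, hFA⟩ := (hloc _ θ k).mp hA
  obtain ⟨hSB, hFB⟩ := (hloc _ θ' (some k')).mp hB
  have hne : (θ, k) ≠ (θ', some k') := by
    intro h
    rw [h, hFB] at hFA
    cases X <;> simp [Rem.after] at hFA
  have hSB' : (θ', some k') ∈ S.erase (θ, k) := Finset.mem_erase.mpr ⟨hne.symm, hSB⟩
  refine ⟨⟨M, ?_⟩, fun Y θ₂ k₂ => ?_, fun θ₂ k₂ h₂ => ?_⟩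
  · have hterm : localConf σ .term θ' (some k')
        = ⟨.term, θ', some (e (iev P σ θ k)), fun x => σ (.inst x θ' (some k'))⟩ := by
      rw [localConf, Option.map_some, hid]
    rw [localConfs_eq_cons hSA, localConfs_eq_cons hSB', hFA, hFB, Multiset.cons_add,
      Multiset.cons_add, hterm] at hM
    convert hM.step_cons₂ Step.join using 2
    · rw [localConfs_eq_cons (Finset.mem_erase.mpr ⟨hne, hSA⟩), Function.update_self,
        localConfs_update_erase X fun _ _ _ => rfl, Finset.erase_right_comm, Multiset.cons_add,
        Multiset.singleton_add]
      rfl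
    · rfl
  · simp only [Set.mem_union, Set.mem_sdiff, Set.mem_insert_iff, Set.mem_singleton_iff, hloc,
      Finset.mem_erase, Function.update_apply]
    grind
  · obtain ⟨hne₂, hS₂⟩ := Finset.mem_erase.mp h₂
    simp [hfree _ _ hS₂]
    grind

lemma insufficiency (h : Tracks P m σ S F) {e : AExp} {θ' : T} {X : Rem T} {θ : T}
    {k : Option (Fin β)} (hA : PPlace.loc (Rem.after (.fork e θ') X) θ k ∈ m) :
    Tracks P (m \ ({.loc (Rem.after (.fork e θ') X) θ k} ∪ (PPlace.inUse θ') '' Set.univ) ∪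
        {.insuff θ'}) σ (S.erase (θ, k)) F := by
  obtain ⟨⟨M, hM⟩, hloc, hfree⟩ := h
  obtain ⟨hS, hF⟩ := (hloc _ θ k).mp hA
  refine ⟨⟨localConf σ (F (θ, k)) θ k ::ₘ M, ?_⟩, fun Y θ₂ k₂ => ?_,
    fun θ₂ k₂ h₂ => ?_⟩
  · rwa [Multiset.add_cons, ← Multiset.cons_add, ← localConfs_eq_cons hS]
  · simp only [Set.mem_union, Set.mem_sdiff, Set.mem_singleton_iff, Set.mem_image, hloc,
      Finset.mem_erase]
    grind
  · simp [hfree _ _ (Finset.mem_of_mem_erase h₂)]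

lemma assign_global (h : Tracks P m σ S F) {x : Var} {e : AExp} {X : Rem T} {θ : T}
    {k : Option (Fin β)} (hA : PPlace.loc (Rem.after (.assign x e) X) θ k ∈ m)
    (hx : P.isGlobal x = true) :
    Tracks P (m \ {.loc (Rem.after (.assign x e) X) θ k} ∪ {.loc X θ k})
      (Function.update σ (.glob x) (e (iev P σ θ k))) S (Function.update F (θ, k) X) :=
  h.local_step hA (fun Y θ₂ k₂ _ => localConf_update_glob x Y θ₂ k₂) <| by
    rw [localConf_update_glob, globalView_update_glob]
    exact Step.assignGlobal hx

lemma assign_local (h : Tracks P m σ S F) {x : Var} {e : AExp} {X : Rem T} {θ : T}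
    {k : Option (Fin β)} (hA : PPlace.loc (Rem.after (.assign x e) X) θ k ∈ m)
    (hx : P.isGlobal x = false) :
    Tracks P (m \ {.loc (Rem.after (.assign x e) X) θ k} ∪ {.loc X θ k})
      (Function.update σ (.inst x θ k) (e (iev P σ θ k))) S (Function.update F (θ, k) X) :=
  h.local_step hA (fun Y _ _ hne => localConf_update_inst_of_ne hne Y) <| by
    rw [localConf_update_inst_self, globalView_update_of_forall_ne (by simp)]
    exact Step.assignLocal hx

end Tracks

lemma PReach.exists_tracks {m : Set (PPlace T β)} {σ : IState T β} (h : PReach P β m σ) :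
    ∃ S F, Tracks P m σ S F := by
  induction h with
  | init σ => exact ⟨_, _, tracks_initMark σ⟩
  | step _ htrans hsub hR ih =>
    obtain ⟨S, F, h⟩ := ih
    cases htrans with
    | assume_ | assert₁ | assert₂ | ite₁ | ite₂ | while₁ | while₂ =>
      obtain ⟨rfl, he⟩ := hR
      exact ⟨S, _, h.local_step (hsub rfl) (fun _ _ _ _ => rfl) (by constructor; exact he)⟩
    | assign x e X θ k =>
      unfold assignRel at hR
      split_ifs at hR with hx <;> subst hR
      · exact ⟨S, _, h.assign_global (hsub rfl) hx⟩
      · exact ⟨S, _, h.assign_local (hsub rfl) (Bool.eq_false_iff.mpr hx)⟩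
    | fork e θ' X θ k k' =>
      subst hR
      exact ⟨_, _, h.fork (hsub (by simp)) (hsub (by simp))⟩
    | insufficiency e θ' X θ k =>
      subst hR
      exact ⟨_, _, h.insufficiency (hsub (by simp))⟩
    | join e X θ k θ' k' =>
      obtain ⟨rfl, hid⟩ := hR
      exact ⟨_, _, h.join (hsub (by simp)) (hsub (by simp)) hid⟩

end Conc

open Conc in
/-- Completeness: if `prog` is correct, then for every thread limit `β`
the petrified program `P_β(prog)` satisfies its safety specification. -/
theorem petrification_complete {T : Type} [DecidableEq T] (P : Prog T)
    (hcorrect : Correct P) :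
    ∀ β : ℕ, Satisfies P β (Ssafe T β) := by
  rintro β ⟨m, σ, hreach, _, hm, θ, k, rfl⟩
  obtain ⟨S, F, h⟩ := hreach.exists_tracks
  exact h.loc_fail_not_mem hcorrect θ k hm
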